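/- arXiv:1909.09010 — 2 statements merged into one kernel-verified Lean document; each statement's English description precedes it below -/
import Mathlib

section
/- Let f : R^d → R be m-strongly convex with L-Lipschitz gradient and minimizer θ_*. Consider n workers running the simple MA algorithm: at each step t, θ̄_t = (1/n)Σ_{j=1}^n θ_t^j and θ_{t+1}^i = θ̄_t − α·(∇f(θ̄_t) + ξ_{t,i}), where the noises ξ_{t,i} are independent with zero mean and E[‖ξ_{t,i}‖²] ≤ σ², and 0 < α ≤ 2/(m+L). Then E[Σ_{i=1}^n ‖θ_{t+1}^i − θ_*‖²] ≤ (1 − 2α·mL/(m+L))·E[Σ_{i=1}^n ‖θ_t^i − θ_*‖²] + n·α²·σ². -/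
open scoped RealInnerProductSpace
open MeasureTheory ProbabilityTheory

/-!
Worker `i` lands at `(θ̄ - α ∇f(θ̄) - θ*) - α ξᵢ`; as `ξᵢ` has mean zero the cross term vanishes in
expectation, leaving `‖θ̄ - α ∇f(θ̄) - θ*‖² + α² E‖ξᵢ‖²`. The deterministic gradient step contracts
by `1 - 2α mL/(m+L)` because of the coercivity inequality
`mL ‖x - y‖² + ‖∇f x - ∇f y‖² ≤ (m + L) ⟪∇f x - ∇f y, x - y⟫`, which is the Baillon–Haddad
cocoercivity of the gradient of the convex, `(L - m)`-smooth function `f - m/2 ‖·‖²`. Finally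
`n ‖θ̄ - θ*‖² ≤ ∑ᵢ ‖θᵢ - θ*‖²` is Jensen's inequality for `‖·‖²`.
-/

theorem contraction_factor_nonneg {m L α : ℝ} (hα0 : 0 < α) (hα : α ≤ 2 / (m + L)) :
    0 ≤ 1 - 2 * α * (m * L / (m + L)) := by
  have hmL : 0 < m + L := (div_pos_iff_of_pos_left two_pos).mp (hα0.trans_le hα)
  have hβ : α * (m + L) ≤ 2 := (le_div_iff₀ hmL).mp hα
  have hfactor : 1 - 2 * α * (m * L / (m + L)) =
      ((m + L) ^ 2 - 2 * (α * (m + L)) * (m * L)) / (m + L) ^ 2 := by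
    field_simp
  rw [hfactor]
  apply div_nonneg _ (sq_nonneg _)
  -- with `β = α (m + L) ∈ [0, 2]` the numerator is `(1 - β/2)(m + L)² + (β/2)(m - L)²`
  nlinarith [mul_nonneg (sub_nonneg.mpr hβ) (sq_nonneg (m + L)),
    mul_nonneg (mul_pos hα0 hmL).le (sq_nonneg (m - L))]

section InnerProduct

variable {E : Type*} [NormedAddCommGroup E] [InnerProductSpace ℝ E]

theorem norm_sub_smul_sq (v x : E) (α : ℝ) :
    ‖v - α • x‖ ^ 2 = ‖v‖ ^ 2 - 2 * α * ⟪v, x⟫ + α ^ 2 * ‖x‖ ^ 2 := by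
  rw [norm_sub_sq_real, inner_smul_right, norm_smul, mul_pow, Real.norm_eq_abs, sq_abs]
  ring

theorem sq_norm_sub_le_of_convex_of_smooth {h : E → ℝ} {G : E → E} {K : ℝ} (hK : 0 ≤ K)
    (hconv : ∀ a b, h a + ⟪G a, b - a⟫ ≤ h b)
    (hsmooth : ∀ a b, h b ≤ h a + ⟪G a, b - a⟫ + K / 2 * ‖b - a‖ ^ 2) (a b : E) :
    ‖G b - G a‖ ^ 2 ≤ 2 * K * (h b - h a - ⟪G a, b - a⟫) := by
  set D := G b - G a
  set Q := h b - h a - ⟪G a, b - a⟫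
  -- test the two bounds at the point `b - t • D` reached by a gradient step from `b`
  have hquad : ∀ t : ℝ, 0 ≤ K / 2 * ‖D‖ ^ 2 * (t * t) + -‖D‖ ^ 2 * t + Q := by
    intro t
    have hlow := hconv a (b - t • D)
    have hup := hsmooth b (b - t • D)
    rw [show b - t • D - a = (b - a) - t • D by abel, inner_sub_right, inner_smul_right] at hlow
    rw [show b - t • D - b = -(t • D) by abel, inner_neg_right, inner_smul_right, norm_neg,
      norm_smul, mul_pow, Real.norm_eq_abs, sq_abs] at hup
    have hD : ⟪G b, D⟫ - ⟪G a, D⟫ = ‖D‖ ^ 2 := by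
      rw [← inner_sub_left, real_inner_self_eq_norm_sq]
    linear_combination hlow + hup - t * hD
  have hdisc := discrim_le_zero hquad
  rw [discrim] at hdisc
  rcases (sq_nonneg ‖D‖).eq_or_lt with hD0 | hDpos
  · have : 0 ≤ Q := by linarith [hconv a b]
    rw [← hD0]; positivity
  · nlinarith

theorem cocoercive_of_convex_of_smooth {h : E → ℝ} {G : E → E} {K : ℝ} (hK : 0 ≤ K)
    (hconv : ∀ a b, h a + ⟪G a, b - a⟫ ≤ h b)
    (hsmooth : ∀ a b, h b ≤ h a + ⟪G a, b - a⟫ + K / 2 * ‖b - a‖ ^ 2) (a b : E) :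
    ‖G a - G b‖ ^ 2 ≤ K * ⟪G a - G b, a - b⟫ := by
  have hab := sq_norm_sub_le_of_convex_of_smooth hK hconv hsmooth a b
  have hba := sq_norm_sub_le_of_convex_of_smooth hK hconv hsmooth b a
  rw [norm_sub_rev] at hab
  have : ⟪G a - G b, a - b⟫ = -⟪G a, b - a⟫ - ⟪G b, a - b⟫ := by
    rw [← neg_sub a b, inner_neg_right, inner_sub_left]; ring
  rw [this]
  linarith

theorem coercive_of_stronglyConvex_of_smooth {f : E → ℝ} {g : E → E} {m L : ℝ} (hmL : m ≤ L)
    (hsc : ∀ x y, f y ≥ f x + ⟪g x, y - x⟫ + (m / 2) * ‖y - x‖ ^ 2)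
    (hsmooth : ∀ x y, f y ≤ f x + ⟪g x, y - x⟫ + L / 2 * ‖y - x‖ ^ 2) (x y : E) :
    m * L * ‖x - y‖ ^ 2 + ‖g x - g y‖ ^ 2 ≤ (m + L) * ⟪g x - g y, x - y⟫ := by
  -- `f - m/2 ‖·‖²` is convex and `(L - m)`-smooth, with gradient `g - m • id`
  let h : E → ℝ := fun z => f z - m / 2 * ‖z‖ ^ 2
  let G : E → E := fun z => g z - m • z
  have hgap : ∀ a b,
      h b - h a - ⟪G a, b - a⟫ = f b - f a - ⟪g a, b - a⟫ - m / 2 * ‖b - a‖ ^ 2 := by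
    intro a b
    simp only [h, G, inner_sub_left, inner_smul_left, norm_sub_sq_real, inner_sub_right,
      real_inner_self_eq_norm_sq, real_inner_comm a b, RCLike.conj_to_real]
    ring
  have hco := cocoercive_of_convex_of_smooth (h := h) (G := G) (sub_nonneg.mpr hmL)
    (fun a b => by linarith [hgap a b, hsc a b])
    (fun a b => by linarith [hgap a b, hsmooth a b]) x y
  have hGsub : G x - G y = (g x - g y) - m • (x - y) := by simp only [G, smul_sub]; abel
  have hGinner :
      ⟪(g x - g y) - m • (x - y), x - y⟫ = ⟪g x - g y, x - y⟫ - m * ‖x - y‖ ^ 2 := by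
    rw [inner_sub_left, real_inner_smul_left, real_inner_self_eq_norm_sq]
  rw [hGsub, norm_sub_smul_sq, hGinner] at hco
  linear_combination hco

theorem norm_sub_smul_sq_le_of_coercive {m L α : ℝ} {u w : E}
    (hcoer : m * L * ‖w‖ ^ 2 + ‖u‖ ^ 2 ≤ (m + L) * ⟪u, w⟫) (hα0 : 0 < α) (hα : α ≤ 2 / (m + L)) :
    ‖w - α • u‖ ^ 2 ≤ (1 - 2 * α * (m * L / (m + L))) * ‖w‖ ^ 2 := by
  have hmL : 0 < m + L := (div_pos_iff_of_pos_left two_pos).mp (hα0.trans_le hα)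
  have hβ : α * (m + L) ≤ 2 := (le_div_iff₀ hmL).mp hα
  rw [← mul_le_mul_iff_of_pos_left hmL, norm_sub_smul_sq, real_inner_comm]
  have : (m + L) * ((1 - 2 * α * (m * L / (m + L))) * ‖w‖ ^ 2) =
      (m + L) * ‖w‖ ^ 2 - 2 * α * (m * L * ‖w‖ ^ 2) := by
    field_simp
  rw [this]
  nlinarith [mul_le_mul_of_nonneg_left hcoer (by positivity : (0 : ℝ) ≤ 2 * α),
    mul_nonneg (mul_nonneg hα0.le (sq_nonneg ‖u‖)) (sub_nonneg.mpr hβ)]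

theorem card_mul_norm_sq_average_sub_le {ι : Type*} [Fintype ι] (θ : ι → E) (c : E) :
    (Fintype.card ι : ℝ) * ‖(1 / (Fintype.card ι : ℝ)) • ∑ j, θ j - c‖ ^ 2 ≤
      ∑ j, ‖θ j - c‖ ^ 2 := by
  rcases isEmpty_or_nonempty ι with hι | hι
  · simp
  set N : ℝ := (Fintype.card ι : ℝ)
  have hN : 0 < N := Nat.cast_pos.mpr Fintype.card_pos
  have havg : (1 / N) • ∑ j, θ j - c = ∑ j, (1 / N) • (θ j - c) := by
    rw [← Finset.smul_sum, Finset.sum_sub_distrib, smul_sub, Finset.sum_const, Finset.card_univ,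
      ← Nat.cast_smul_eq_nsmul ℝ, smul_smul, one_div_mul_cancel hN.ne', one_smul]
  have hjensen := (convexOn_univ_norm.pow (fun x _ => norm_nonneg x) 2).map_sum_le
    (t := Finset.univ) (w := fun _ => 1 / N) (p := fun j => θ j - c) (fun _ _ => by positivity)
    (by simp [N, hN.ne']) (fun _ _ => Set.mem_univ _)
  rw [havg]
  simp only [smul_eq_mul, ← Finset.mul_sum, Pi.pow_apply] at hjensen
  calc N * ‖∑ j, (1 / N) • (θ j - c)‖ ^ 2 ≤ N * (1 / N * ∑ j, ‖θ j - c‖ ^ 2) := by gcongr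
    _ = ∑ j, ‖θ j - c‖ ^ 2 := by field_simp

end InnerProduct

section Gradient

variable {E : Type*} [NormedAddCommGroup E] [InnerProductSpace ℝ E] [CompleteSpace E]

theorem HasGradientAt.hasDerivAt_comp_add_smul {f : E → ℝ} {f' x v : E} {t : ℝ}
    (hf : HasGradientAt f f' (x + t • v)) :
    HasDerivAt (fun s : ℝ => f (x + s • v)) ⟪f', v⟫ t := by
  have hline : HasDerivAt (fun s : ℝ => x + s • v) v t := by
    simpa using ((hasDerivAt_id t).smul_const v).const_add x
  simpa [InnerProductSpace.toDual_apply_apply, Function.comp_def] using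
    (hasGradientAt_iff_hasFDerivAt.mp hf).comp_hasDerivAt t hline

theorem IsLocalMin.hasGradientAt_eq_zero {f : E → ℝ} {f' x : E} (hmin : IsLocalMin f x)
    (hf : HasGradientAt f f' x) : f' = 0 := by
  simpa using hmin.hasFDerivAt_eq_zero (hasGradientAt_iff_hasFDerivAt.mp hf)

theorem le_add_inner_add_sq_of_lipschitz_gradient {f : E → ℝ} {g : E → E} {L : ℝ}
    (hgrad : ∀ x, HasGradientAt f (g x) x) (hlip : ∀ x y, ‖g x - g y‖ ≤ L * ‖x - y‖)
    (x y : E) : f y ≤ f x + ⟪g x, y - x⟫ + L / 2 * ‖y - x‖ ^ 2 := by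
  set v := y - x
  -- the gap to the quadratic upper model decreases along the segment from `x` to `y`
  let φ : ℝ → ℝ := fun t => f (x + t • v) - t * ⟪g x, v⟫ - L / 2 * t ^ 2 * ‖v‖ ^ 2
  have hφ : ∀ t, HasDerivAt φ (⟪g (x + t • v) - g x, v⟫ - L * t * ‖v‖ ^ 2) t := by
    intro t
    have := (((hgrad _).hasDerivAt_comp_add_smul (x := x) (v := v) (t := t)).sub
      ((hasDerivAt_id t).mul_const ⟪g x, v⟫)).sub
      (((hasDerivAt_pow 2 t).const_mul (L / 2)).mul_const (‖v‖ ^ 2))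
    refine this.congr_deriv ?_
    rw [inner_sub_left]; ring
  have hanti : AntitoneOn φ (Set.Ici 0) := by
    refine antitoneOn_of_hasDerivWithinAt_nonpos (convex_Ici 0)
      (fun t _ => (hφ t).continuousAt.continuousWithinAt)
      (fun t _ => (hφ t).hasDerivWithinAt) fun t ht => ?_
    rw [interior_Ici, Set.mem_Ioi] at ht
    have hcs := real_inner_le_norm (g (x + t • v) - g x) v
    have hl := hlip (x + t • v) x
    rw [add_sub_cancel_left, norm_smul, Real.norm_eq_abs, abs_of_pos ht] at hl
    nlinarith [norm_nonneg v]
  have := hanti (Set.mem_Ici.mpr le_rfl) (Set.mem_Ici.mpr zero_le_one) zero_le_one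
  simp only [φ, zero_smul, add_zero, one_smul, add_sub_cancel, zero_mul, sub_zero, one_mul,
    one_pow, v] at this
  linarith

end Gradient

section Noise

variable {E : Type*} [NormedAddCommGroup E] [InnerProductSpace ℝ E]
  {Ω : Type*} [MeasurableSpace Ω] {μ : Measure Ω} {ξ : Ω → E}

theorem integrable_norm_sub_smul_sq [IsFiniteMeasure μ] (hξ : Integrable ξ μ)
    (hξ2 : Integrable (fun ω => ‖ξ ω‖ ^ 2) μ) (v : E) (α : ℝ) :
    Integrable (fun ω => ‖v - α • ξ ω‖ ^ 2) μ := by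
  simp only [norm_sub_smul_sq]
  exact ((integrable_const _).sub ((hξ.const_inner v).const_mul _)).add (hξ2.const_mul _)

theorem integral_norm_sub_smul_sq [CompleteSpace E] [IsProbabilityMeasure μ] (hξ : Integrable ξ μ)
    (hξ2 : Integrable (fun ω => ‖ξ ω‖ ^ 2) μ) (hmean : ∫ ω, ξ ω ∂μ = 0) (v : E) (α : ℝ) :
    ∫ ω, ‖v - α • ξ ω‖ ^ 2 ∂μ = ‖v‖ ^ 2 + α ^ 2 * ∫ ω, ‖ξ ω‖ ^ 2 ∂μ := by
  simp only [norm_sub_smul_sq]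
  have hinner : Integrable (fun ω => 2 * α * ⟪v, ξ ω⟫) μ := (hξ.const_inner v).const_mul _
  rw [integral_add (f := fun ω => ‖v‖ ^ 2 - 2 * α * ⟪v, ξ ω⟫) ((integrable_const _).sub hinner)
      (hξ2.const_mul _),
    integral_sub (integrable_const _) hinner, integral_const,
    integral_const_mul, integral_const_mul, integral_inner hξ, hmean, inner_zero_right]
  simp

end Noise

theorem MA_one_step_recursion_general {d n : ℕ} {m L α σ : ℝ}
    (hmL : m ≤ L) (hα0 : 0 < α) (hα : α ≤ 2 / (m + L))
    (f : EuclideanSpace ℝ (Fin d) → ℝ) (g : EuclideanSpace ℝ (Fin d) → EuclideanSpace ℝ (Fin d))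
    (hgrad : ∀ x, HasGradientAt f (g x) x)
    (hsc : ∀ x y, f y ≥ f x + ⟪g x, y - x⟫ + (m / 2) * ‖y - x‖ ^ 2)
    (hlip : ∀ x y, ‖g x - g y‖ ≤ L * ‖x - y‖)
    (θs : EuclideanSpace ℝ (Fin d)) (hmin : ∀ x, f θs ≤ f x)
    {Ω : Type*} [MeasureSpace Ω] [IsProbabilityMeasure (ℙ : Measure Ω)]
    (ξ : Fin n → Ω → EuclideanSpace ℝ (Fin d))
    (hint : ∀ i, Integrable (ξ i)) (hint2 : ∀ i, Integrable (fun ω => ‖ξ i ω‖ ^ 2))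
    (hmean : ∀ i, ∫ ω, ξ i ω = 0) (hvar : ∀ i, ∫ ω, ‖ξ i ω‖ ^ 2 ≤ σ ^ 2)
    (θ : Fin n → EuclideanSpace ℝ (Fin d)) :
    (∫ ω, ∑ i, ‖((1 / (n : ℝ)) • ∑ j, θ j) -
        α • (g ((1 / (n : ℝ)) • ∑ j, θ j) + ξ i ω) - θs‖ ^ 2) ≤
      (1 - 2 * α * (m * L / (m + L))) * ∑ i, ‖θ i - θs‖ ^ 2 + (n : ℝ) * α ^ 2 * σ ^ 2 := by
  set θb := (1 / (n : ℝ)) • ∑ j, θ j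
  set c := 1 - 2 * α * (m * L / (m + L))
  have hgθs : g θs = 0 :=
    IsLocalMin.hasGradientAt_eq_zero (Filter.Eventually.of_forall hmin) (hgrad θs)
  have hstep : ‖θb - α • g θb - θs‖ ^ 2 ≤ c * ‖θb - θs‖ ^ 2 := by
    have hcoer := coercive_of_stronglyConvex_of_smooth hmL hsc
      (le_add_inner_add_sq_of_lipschitz_gradient hgrad hlip) θb θs
    rw [hgθs, sub_zero] at hcoer
    rw [sub_right_comm]
    exact norm_sub_smul_sq_le_of_coercive hcoer hα0 hα
  have havg : (n : ℝ) * ‖θb - θs‖ ^ 2 ≤ ∑ i, ‖θ i - θs‖ ^ 2 := by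
    simpa only [Fintype.card_fin] using card_mul_norm_sq_average_sub_le θ θs
  have hsplit : ∀ i ω, θb - α • (g θb + ξ i ω) - θs = (θb - α • g θb - θs) - α • ξ i ω := by
    intro i ω
    rw [smul_add]
    abel
  calc ∫ ω, ∑ i, ‖θb - α • (g θb + ξ i ω) - θs‖ ^ 2
      = ∑ i, (‖θb - α • g θb - θs‖ ^ 2 + α ^ 2 * ∫ ω, ‖ξ i ω‖ ^ 2) := by
        simp only [hsplit]
        rw [integral_finsetSum _ fun i _ => integrable_norm_sub_smul_sq (hint i) (hint2 i) _ _]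
        exact Finset.sum_congr rfl fun i _ =>
          integral_norm_sub_smul_sq (hint i) (hint2 i) (hmean i) _ _
    _ ≤ ∑ i : Fin n, (c * ‖θb - θs‖ ^ 2 + α ^ 2 * σ ^ 2) := by
        gcongr with i
        exact hvar i
    _ = c * ((n : ℝ) * ‖θb - θs‖ ^ 2) + (n : ℝ) * α ^ 2 * σ ^ 2 := by
        simp only [Finset.sum_const, Finset.card_univ, Fintype.card_fin, nsmul_eq_mul]
        ring
    _ ≤ c * ∑ i, ‖θ i - θs‖ ^ 2 + (n : ℝ) * α ^ 2 * σ ^ 2 := by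
        gcongr
        exact contraction_factor_nonneg hα0 hα

theorem MA_one_step_recursion {d n : ℕ} {m L α σ : ℝ}
    (hn : 0 < n) (hm : 0 < m) (hmL : m ≤ L) (hα0 : 0 < α) (hα : α ≤ 2 / (m + L)) (hσ : 0 ≤ σ)
    (f : EuclideanSpace ℝ (Fin d) → ℝ) (g : EuclideanSpace ℝ (Fin d) → EuclideanSpace ℝ (Fin d))
    (hgrad : ∀ x, HasGradientAt f (g x) x)
    (hsc : ∀ x y, f y ≥ f x + ⟪g x, y - x⟫ + (m / 2) * ‖y - x‖ ^ 2)
    (hlip : ∀ x y, ‖g x - g y‖ ≤ L * ‖x - y‖)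
    (θs : EuclideanSpace ℝ (Fin d)) (hmin : ∀ x, f θs ≤ f x)
    {Ω : Type*} [MeasureSpace Ω] [IsProbabilityMeasure (ℙ : Measure Ω)]
    (ξ : Fin n → Ω → EuclideanSpace ℝ (Fin d))
    (hindep : iIndepFun ξ ℙ)
    (hint : ∀ i, Integrable (ξ i)) (hint2 : ∀ i, Integrable (fun ω => ‖ξ i ω‖ ^ 2))
    (hmean : ∀ i, ∫ ω, ξ i ω = 0) (hvar : ∀ i, ∫ ω, ‖ξ i ω‖ ^ 2 ≤ σ ^ 2)
    (θ : Fin n → EuclideanSpace ℝ (Fin d)) :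
    (∫ ω, ∑ i, ‖((1 / (n : ℝ)) • ∑ j, θ j) -
        α • (g ((1 / (n : ℝ)) • ∑ j, θ j) + ξ i ω) - θs‖ ^ 2) ≤
      (1 - 2 * α * (m * L / (m + L))) * ∑ i, ‖θ i - θs‖ ^ 2 + (n : ℝ) * α ^ 2 * σ ^ 2 :=
  MA_one_step_recursion_general hmL hα0 hα f g hgrad hsc hlip θs hmin ξ hint hint2 hmean hvar θ
end

section
/- Let f be m-strongly convex with L-Lipschitz gradient, minimizer θ_*, step 0 < α ≤ 2/(m+L), and consider averaged SGD θ̄_{t+1} = θ̄_t − α(∇f(θ̄_t) + ξ̄_t) with E[ξ̄_t] = 0, E‖ξ̄_t‖² ≤ σ²/n, noises independent across t. Then E[‖θ̄_t − θ_*‖²] ≤ (1 − 2α·mL/(m+L))^t·‖θ̄_0 − θ_*‖² + ((m+L)/(2mLn))·α·σ². -/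
/-!
Strong convexity together with an `L`-Lipschitz gradient gives the coercivity inequality
`‖∇f y - ∇f x‖² + m L ‖y - x‖² ≤ (m + L) ⟪∇f y - ∇f x, y - x⟫` (apply Baillon–Haddad
cocoercivity to the convex function `f - m/2 ‖·‖²`), and with `∇f θ* = 0` this makes the
deterministic step `z ↦ z - α ∇f z` contract `‖z - θ*‖²` by `ρ = 1 - 2αmL/(m+L) ∈ [0, 1)`.
The iterate `θ̄_t` is a measurable function of `ξ̄_0, …, ξ̄_{t-1}`, hence independent of the
centred noise `ξ̄_t`, so the cross term vanishes in expectation and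
`E‖θ̄_{t+1} - θ*‖² ≤ ρ E‖θ̄_t - θ*‖² + α²σ²/n`. Unrolling this recursion gives the bound,
with bias `α²σ²/(n(1 - ρ)) = (m + L) α σ² / (2mLn)`.
-/

open scoped RealInnerProductSpace
open MeasureTheory ProbabilityTheory

section Deterministic

variable {F : Type*} [NormedAddCommGroup F] [InnerProductSpace ℝ F] {f : F → ℝ} {g : F → F}

theorem le_add_inner_add_of_lipschitz_gradient [CompleteSpace F] {C : ℝ}
    (hgrad : ∀ x, HasGradientAt f (g x) x) (hlip : ∀ x y, ‖g x - g y‖ ≤ C * ‖x - y‖) (x y : F) :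
    f y ≤ f x + ⟪g x, y - x⟫ + C / 2 * ‖y - x‖ ^ 2 := by
  set φ : ℝ → ℝ :=
    fun t ↦ f (x + t • (y - x)) - (t * ⟪g x, y - x⟫ + C / 2 * t ^ 2 * ‖y - x‖ ^ 2)
  have hφ : ∀ t, HasDerivAt φ (⟪g (x + t • (y - x)) - g x, y - x⟫ - C * t * ‖y - x‖ ^ 2) t := by
    intro t
    have hline : HasDerivAt (fun s : ℝ ↦ x + s • (y - x)) (y - x) t := by
      simpa using ((hasDerivAt_id t).smul_const (y - x)).const_add x
    have hf := (hasGradientAt_iff_hasFDerivAt.1 (hgrad _)).comp_hasDerivAt t hline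
    have hq := ((hasDerivAt_id t).mul_const ⟪g x, y - x⟫).add
      (((hasDerivAt_pow 2 t).const_mul (C / 2)).mul_const (‖y - x‖ ^ 2))
    refine (hf.sub hq).congr_deriv ?_
    simp only [InnerProductSpace.toDual_apply_apply, inner_sub_left]
    ring
  have hφ_nonpos : ∀ t ∈ interior (Set.Ici (0 : ℝ)),
      ⟪g (x + t • (y - x)) - g x, y - x⟫ - C * t * ‖y - x‖ ^ 2 ≤ 0 := by
    intro t ht
    rw [interior_Ici] at ht
    have hlip_t := hlip (x + t • (y - x)) x
    rw [add_sub_cancel_left, norm_smul, Real.norm_of_nonneg ht.le] at hlip_t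
    rw [sub_nonpos]
    calc ⟪g (x + t • (y - x)) - g x, y - x⟫ ≤ ‖g (x + t • (y - x)) - g x‖ * ‖y - x‖ :=
          real_inner_le_norm _ _
      _ ≤ C * (t * ‖y - x‖) * ‖y - x‖ := by gcongr
      _ = C * t * ‖y - x‖ ^ 2 := by ring
  have hanti := antitoneOn_of_hasDerivWithinAt_nonpos (convex_Ici 0)
    (fun t _ ↦ (hφ t).continuousAt.continuousWithinAt) (fun t _ ↦ (hφ t).hasDerivWithinAt)
    hφ_nonpos
  have h10 := hanti Set.self_mem_Ici (Set.mem_Ici.2 zero_le_one) zero_le_one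
  simp only [φ, zero_smul, one_smul, add_zero, add_sub_cancel] at h10
  linarith

theorem sq_norm_sub_le_of_convex_of_le_add_inner_add {C : ℝ} (hC : 0 < C)
    (hconv : ∀ x y, f x + ⟪g x, y - x⟫ ≤ f y)
    (hsmooth : ∀ x y, f y ≤ f x + ⟪g x, y - x⟫ + C / 2 * ‖y - x‖ ^ 2) (x y : F) :
    ‖g y - g x‖ ^ 2 ≤ 2 * C * (f y - f x - ⟪g x, y - x⟫) := by
  set H := g y - g x
  set w := y - C⁻¹ • H
  have hup := hsmooth y w
  have hlow := hconv x w
  have hwy : w - y = -(C⁻¹ • H) := by simp [w]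
  have hwx : w - x = (y - x) - C⁻¹ • H := by simp only [w]; abel
  rw [hwy, inner_neg_right, real_inner_smul_right, norm_neg, norm_smul,
    Real.norm_of_nonneg (inv_nonneg.2 hC.le)] at hup
  rw [hwx, inner_sub_right, real_inner_smul_right] at hlow
  have hH : C⁻¹ * ⟪g y, H⟫ - C⁻¹ * ⟪g x, H⟫ = C⁻¹ * ‖H‖ ^ 2 := by
    rw [← mul_sub, ← inner_sub_left, real_inner_self_eq_norm_sq]
  have hquad : C / 2 * (C⁻¹ * ‖H‖) ^ 2 = C⁻¹ * ‖H‖ ^ 2 / 2 := by field_simp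
  have hbound : C⁻¹ * ‖H‖ ^ 2 / 2 ≤ f y - f x - ⟪g x, y - x⟫ := by linarith
  calc ‖H‖ ^ 2 = 2 * C * (C⁻¹ * ‖H‖ ^ 2 / 2) := by field_simp
    _ ≤ _ := by gcongr

theorem cocoercive_of_convex_of_le_add_inner_add {C : ℝ} (hC : 0 < C)
    (hconv : ∀ x y, f x + ⟪g x, y - x⟫ ≤ f y)
    (hsmooth : ∀ x y, f y ≤ f x + ⟪g x, y - x⟫ + C / 2 * ‖y - x‖ ^ 2) (x y : F) :
    ‖g y - g x‖ ^ 2 ≤ C * ⟪g y - g x, y - x⟫ := by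
  have hxy := sq_norm_sub_le_of_convex_of_le_add_inner_add hC hconv hsmooth x y
  have hyx := sq_norm_sub_le_of_convex_of_le_add_inner_add hC hconv hsmooth y x
  rw [norm_sub_rev, ← neg_sub y x, inner_neg_right] at hyx
  rw [inner_sub_left]
  linarith

theorem strongly_monotone_of_strongly_convex {m : ℝ}
    (hsc : ∀ x y, f y ≥ f x + ⟪g x, y - x⟫ + (m / 2) * ‖y - x‖ ^ 2) (x y : F) :
    m * ‖y - x‖ ^ 2 ≤ ⟪g y - g x, y - x⟫ := by
  have hxy := hsc x y
  have hyx := hsc y x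
  rw [norm_sub_rev, ← neg_sub y x, inner_neg_right] at hyx
  rw [inner_sub_left]
  linarith

variable {m L : ℝ}

theorem coercive_of_strongly_convex_of_lipschitz_gradient [CompleteSpace F] (hm : 0 < m)
    (hmL : m ≤ L) (hgrad : ∀ x, HasGradientAt f (g x) x)
    (hsc : ∀ x y, f y ≥ f x + ⟪g x, y - x⟫ + (m / 2) * ‖y - x‖ ^ 2)
    (hlip : ∀ x y, ‖g x - g y‖ ≤ L * ‖x - y‖) (x y : F) :
    ‖g y - g x‖ ^ 2 + m * L * ‖y - x‖ ^ 2 ≤ (m + L) * ⟪g y - g x, y - x⟫ := by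
  have hsmooth := le_add_inner_add_of_lipschitz_gradient hgrad hlip
  rcases hmL.eq_or_lt with rfl | hlt
  · have hconv : ∀ x y, f x + ⟪g x, y - x⟫ ≤ f y := fun x y ↦ by
      nlinarith [hsc x y, sq_nonneg ‖y - x‖]
    have hcoco := cocoercive_of_convex_of_le_add_inner_add hm hconv hsmooth x y
    nlinarith [strongly_monotone_of_strongly_convex hsc x y]
  · -- `f - m/2 ‖·‖²` is convex and `(L - m)`-smooth, with gradient `g - m • id`.
    set G : F → F := fun z ↦ g z - m • z
    have hbregman : ∀ a b : F,
        (f b - m / 2 * ‖b‖ ^ 2) - (f a - m / 2 * ‖a‖ ^ 2) - ⟪G a, b - a⟫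
          = f b - f a - ⟪g a, b - a⟫ - m / 2 * ‖b - a‖ ^ 2 := by
      intro a b
      simp only [G, inner_sub_left, real_inner_smul_left, inner_sub_right,
        real_inner_self_eq_norm_sq, norm_sub_sq_real, real_inner_comm a b]
      ring
    have hcoco := cocoercive_of_convex_of_le_add_inner_add
      (f := fun z ↦ f z - m / 2 * ‖z‖ ^ 2) (g := G) (sub_pos.2 hlt)
      (fun a b ↦ by linarith [hbregman a b, hsc a b])
      (fun a b ↦ by linarith [hbregman a b, hsmooth a b]) x y
    have hGxy : G y - G x = (g y - g x) - m • (y - x) := by simp only [G, smul_sub]; abel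
    have hnorm : ‖(g y - g x) - m • (y - x)‖ ^ 2
        = ‖g y - g x‖ ^ 2 - 2 * m * ⟪g y - g x, y - x⟫ + m ^ 2 * ‖y - x‖ ^ 2 := by
      rw [norm_sub_sq_real, real_inner_smul_right, norm_smul, Real.norm_of_nonneg hm.le]
      ring
    have hinner : ⟪(g y - g x) - m • (y - x), y - x⟫
        = ⟪g y - g x, y - x⟫ - m * ‖y - x‖ ^ 2 := by
      rw [inner_sub_left, real_inner_smul_left, real_inner_self_eq_norm_sq]
    rw [hGxy, hnorm, hinner] at hcoco
    nlinarith

theorem gradient_eq_zero_of_forall_le [CompleteSpace F] (hgrad : ∀ x, HasGradientAt f (g x) x)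
    {θ : F} (hmin : ∀ x, f θ ≤ f x) : g θ = 0 :=
  (InnerProductSpace.toDual ℝ F).map_eq_zero_iff.1 <|
    IsLocalMin.hasFDerivAt_eq_zero (Filter.Eventually.of_forall hmin)
      (hasGradientAt_iff_hasFDerivAt.1 (hgrad θ))

theorem sq_norm_gradient_step_sub_le [CompleteSpace F] {α : ℝ} (hm : 0 < m) (hmL : m ≤ L)
    (hα0 : 0 < α) (hα : α ≤ 2 / (m + L)) (hgrad : ∀ x, HasGradientAt f (g x) x)
    (hsc : ∀ x y, f y ≥ f x + ⟪g x, y - x⟫ + (m / 2) * ‖y - x‖ ^ 2)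
    (hlip : ∀ x y, ‖g x - g y‖ ≤ L * ‖x - y‖) {θ : F} (hmin : ∀ x, f θ ≤ f x) (z : F) :
    ‖z - α • g z - θ‖ ^ 2 ≤ (1 - 2 * α * (m * L / (m + L))) * ‖z - θ‖ ^ 2 := by
  have hmL' : 0 < m + L := by linarith
  have hcoer := coercive_of_strongly_convex_of_lipschitz_gradient hm hmL hgrad hsc hlip θ z
  rw [gradient_eq_zero_of_forall_le hgrad hmin, sub_zero] at hcoer
  have hαL : α * (m + L) ≤ 2 := (le_div_iff₀ hmL').1 hα
  rw [sub_right_comm, norm_sub_sq_real, real_inner_smul_right, norm_smul,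
    Real.norm_of_nonneg hα0.le, real_inner_comm]
  have hρ : (1 - 2 * α * (m * L / (m + L))) * ‖z - θ‖ ^ 2 * (m + L)
      = (m + L) * ‖z - θ‖ ^ 2 - 2 * α * m * L * ‖z - θ‖ ^ 2 := by field_simp
  rw [← mul_le_mul_iff_of_pos_right hmL', hρ]
  nlinarith [mul_le_mul_of_nonneg_left hαL (mul_nonneg hα0.le (sq_nonneg ‖g z‖))]

end Deterministic

theorem le_pow_mul_add_div_of_le_mul_add {a : ℕ → ℝ} {ρ c : ℝ} (hρ0 : 0 ≤ ρ) (hρ1 : ρ < 1)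
    (hc : 0 ≤ c) (h : ∀ t, a (t + 1) ≤ ρ * a t + c) (t : ℕ) :
    a t ≤ ρ ^ t * a 0 + c / (1 - ρ) := by
  have hfix : ρ * (c / (1 - ρ)) + c = c / (1 - ρ) := by
    field_simp [(sub_pos.2 hρ1).ne']
    ring
  induction t with
  | zero => simpa using div_nonneg hc (sub_pos.2 hρ1).le
  | succ t ih =>
    calc a (t + 1) ≤ ρ * a t + c := h t
      _ ≤ ρ * (ρ ^ t * a 0 + c / (1 - ρ)) + c := by gcongr
      _ = ρ ^ (t + 1) * a 0 + c / (1 - ρ) := by linear_combination hfix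

theorem one_sub_two_mul_mul_div_add_mem_Ico {m L α : ℝ} (hm : 0 < m) (hL : 0 < L) (hα0 : 0 < α)
    (hα : α ≤ 2 / (m + L)) : 1 - 2 * α * (m * L / (m + L)) ∈ Set.Ico 0 1 := by
  have hmL : 0 < m + L := by positivity
  have hαL : α * (m + L) ≤ 2 := (le_div_iff₀ hmL).1 hα
  constructor
  · rw [sub_nonneg, mul_div_assoc', div_le_one hmL]
    nlinarith [sq_nonneg (m - L), mul_pos hm hL]
  · have : 0 < 2 * α * (m * L / (m + L)) := by positivity
    linarith

section NoisyIterate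

variable {Ω E F : Type*}

def noisyIterate (Φ : E × F → E) (x₀ : E) (ξ : ℕ → Ω → F) : ℕ → Ω → E
  | 0 => fun _ ↦ x₀
  | t + 1 => fun ω ↦ Φ (noisyIterate Φ x₀ ξ t ω, ξ t ω)

variable {Φ : E × F → E} {x₀ : E} {ξ : ℕ → Ω → F}

theorem eq_noisyIterate {x : ℕ → Ω → E} (h0 : ∀ ω, x 0 ω = x₀)
    (hsucc : ∀ t ω, x (t + 1) ω = Φ (x t ω, ξ t ω)) : x = noisyIterate Φ x₀ ξ := by
  funext t ω
  induction t with
  | zero => exact h0 ω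
  | succ t ih => rw [hsucc, ih]; rfl

theorem noisyIterate_ae_eq {_ : MeasurableSpace Ω} {μ : Measure Ω} {ξ' : ℕ → Ω → F}
    (h : ∀ i, ξ i =ᵐ[μ] ξ' i) (t : ℕ) :
    noisyIterate Φ x₀ ξ t =ᵐ[μ] noisyIterate Φ x₀ ξ' t := by
  induction t with
  | zero => rfl
  | succ t ih =>
    filter_upwards [ih, h t] with ω hx hξ
    simp only [noisyIterate, hx, hξ]

variable [MeasurableSpace E] [mF : MeasurableSpace F]

theorem measurable_noisyIterate_past (hΦ : Measurable Φ) (t : ℕ) :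
    Measurable[⨆ i ∈ Set.Iio t, mF.comap (ξ i)] (noisyIterate Φ x₀ ξ t) := by
  induction t with
  | zero => exact measurable_const
  | succ t ih =>
    refine hΦ.comp (Measurable.prodMk (ih.mono ?_ le_rfl) ((comap_measurable (ξ t)).mono ?_ le_rfl))
    · exact biSup_mono fun i hi ↦ Set.mem_Iio.2 (Nat.lt_succ_of_lt hi)
    · exact le_biSup (fun i ↦ mF.comap (ξ i)) (Set.mem_Iio.2 (Nat.lt_succ_self t))

variable [MeasurableSpace Ω] {μ : Measure Ω}

theorem indepFun_noisyIterate (hΦ : Measurable Φ) (hξ : ∀ i, Measurable (ξ i))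
    (hind : iIndepFun ξ μ) (t : ℕ) : IndepFun (noisyIterate Φ x₀ ξ t) (ξ t) μ := by
  rw [IndepFun_iff_Indep]
  have h := indep_biSup_compl (fun i ↦ (hξ i).comap_le) hind.iIndep (Set.Iio t)
  refine indep_of_indep_of_le_right
    (indep_of_indep_of_le_left h (measurable_noisyIterate_past hΦ t).comap_le) ?_
  exact le_biSup (fun i ↦ mF.comap (ξ i)) (by simp : t ∈ (Set.Iio t)ᶜ)

theorem indepFun_noisyIterate_of_aemeasurable (hΦ : Measurable Φ) (hξ : ∀ i, AEMeasurable (ξ i) μ)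
    (hind : iIndepFun ξ μ) (t : ℕ) : IndepFun (noisyIterate Φ x₀ ξ t) (ξ t) μ :=
  (indepFun_noisyIterate hΦ (fun i ↦ (hξ i).measurable_mk)
    (hind.congr fun i ↦ (hξ i).ae_eq_mk) t).congr
    (noisyIterate_ae_eq (fun i ↦ (hξ i).ae_eq_mk) t).symm (hξ t).ae_eq_mk.symm

end NoisyIterate

section NoisyStep

variable {Ω E : Type*} [MeasurableSpace Ω] {μ : Measure Ω}
  [NormedAddCommGroup E] [MeasurableSpace E] [BorelSpace E]
  [SecondCountableTopology E] {T : E → E} {θ : E} {ρ : ℝ} {X N : Ω → E}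

theorem memLp_two_comp_of_sq_norm_sub_le [IsFiniteMeasure μ] (hT : Measurable T)
    (hcontr : ∀ z, ‖T z - θ‖ ^ 2 ≤ ρ * ‖z - θ‖ ^ 2) (hX : MemLp X 2 μ) :
    MemLp (fun ω ↦ T (X ω)) 2 μ := by
  have hTX : AEStronglyMeasurable (fun ω ↦ T (X ω) - θ) μ :=
    ((hT.comp_aemeasurable hX.aemeasurable).sub_const θ).aestronglyMeasurable
  have hXθ := hX.sub (memLp_const θ)
  have hsq : Integrable (fun ω ↦ ‖T (X ω) - θ‖ ^ 2) μ :=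
    (((memLp_two_iff_integrable_sq_norm hXθ.1).1 hXθ).const_mul ρ).mono'
      (hTX.norm.pow 2) (Filter.Eventually.of_forall fun ω ↦ by
        rw [Real.norm_of_nonneg (by positivity)]; exact hcontr (X ω))
  simpa only [Pi.add_def, sub_add_cancel] using
    ((memLp_two_iff_integrable_sq_norm hTX).2 hsq).add (memLp_const θ)

variable [InnerProductSpace ℝ E] [CompleteSpace E]

theorem integral_sq_norm_sub_smul_sub_le [IsFiniteMeasure μ] (hT : Measurable T)
    (hcontr : ∀ z, ‖T z - θ‖ ^ 2 ≤ ρ * ‖z - θ‖ ^ 2) (hXN : IndepFun X N μ)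
    (hX : MemLp X 2 μ) (hN : MemLp N 2 μ) (hN0 : ∫ ω, N ω ∂μ = 0) (α : ℝ) :
    ∫ ω, ‖T (X ω) - α • N ω - θ‖ ^ 2 ∂μ
      ≤ ρ * ∫ ω, ‖X ω - θ‖ ^ 2 ∂μ + α ^ 2 * ∫ ω, ‖N ω‖ ^ 2 ∂μ := by
  set V := fun ω ↦ T (X ω) - θ
  have hV : MemLp V 2 μ := (memLp_two_comp_of_sq_norm_sub_le hT hcontr hX).sub (memLp_const θ)
  have hVN : IndepFun V N μ := hXN.comp (hT.sub measurable_const) measurable_id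
  have hV2 := (memLp_two_iff_integrable_sq_norm hV.1).1 hV
  have hN2 := (memLp_two_iff_integrable_sq_norm hN.1).1 hN
  have hVNint : Integrable (fun ω ↦ ⟪V ω, N ω⟫) μ :=
    hVN.integrable_bilin (hV.integrable one_le_two) (hN.integrable one_le_two) (innerSL ℝ)
  have hcross : ∫ ω, ⟪V ω, N ω⟫ ∂μ = 0 := by
    have h := hVN.integral_bilin (hV.integrable one_le_two) (hN.integrable one_le_two) (innerSL ℝ)
    rwa [hN0, map_zero] at h
  have hexpand : ∀ ω, ‖T (X ω) - α • N ω - θ‖ ^ 2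
      = ‖V ω‖ ^ 2 - 2 * α * ⟪V ω, N ω⟫ + α ^ 2 * ‖N ω‖ ^ 2 := fun ω ↦ by
    rw [sub_right_comm, norm_sub_sq_real, real_inner_smul_right, norm_smul, mul_pow,
      Real.norm_eq_abs, sq_abs]
    ring
  have hdet : ∫ ω, ‖V ω‖ ^ 2 ∂μ ≤ ρ * ∫ ω, ‖X ω - θ‖ ^ 2 ∂μ := by
    have hXθ := hX.sub (memLp_const θ)
    rw [← integral_const_mul]
    exact integral_mono hV2 (((memLp_two_iff_integrable_sq_norm hXθ.1).1 hXθ).const_mul ρ)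
      fun ω ↦ hcontr (X ω)
  have hcross' : Integrable (fun ω ↦ 2 * α * ⟪V ω, N ω⟫) μ := hVNint.const_mul _
  have hfirst : Integrable (fun ω ↦ ‖V ω‖ ^ 2 - 2 * α * ⟪V ω, N ω⟫) μ := hV2.sub hcross'
  simp_rw [hexpand]
  rw [integral_add hfirst (hN2.const_mul _), integral_sub hV2 hcross',
    integral_const_mul, integral_const_mul, hcross]
  linarith

end NoisyStep

section SGD

variable {Ω E : Type*} [MeasurableSpace Ω] {μ : Measure Ω} [IsProbabilityMeasure μ]
  [NormedAddCommGroup E] [InnerProductSpace ℝ E] [CompleteSpace E] [MeasurableSpace E]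
  [BorelSpace E] [SecondCountableTopology E]

theorem integral_sq_norm_sgd_sub_le {g : E → E} {α ρ v : ℝ} {θ θ₀ : E} (hg : Measurable g)
    (hρ0 : 0 ≤ ρ) (hρ1 : ρ < 1) (hcontr : ∀ z, ‖z - α • g z - θ‖ ^ 2 ≤ ρ * ‖z - θ‖ ^ 2)
    {ξ : ℕ → Ω → E} (hind : iIndepFun ξ μ) (hξ : ∀ t, MemLp (ξ t) 2 μ)
    (hmean : ∀ t, ∫ ω, ξ t ω ∂μ = 0) (hvar : ∀ t, ∫ ω, ‖ξ t ω‖ ^ 2 ∂μ ≤ v)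
    {x : ℕ → Ω → E} (hinit : ∀ ω, x 0 ω = θ₀)
    (hupd : ∀ t ω, x (t + 1) ω = x t ω - α • (g (x t ω) + ξ t ω)) (t : ℕ) :
    ∫ ω, ‖x t ω - θ‖ ^ 2 ∂μ ≤ ρ ^ t * ‖θ₀ - θ‖ ^ 2 + α ^ 2 * v / (1 - ρ) := by
  have hT : Measurable fun z ↦ z - α • g z := by fun_prop
  have hstep : ∀ t, x (t + 1) = fun ω ↦ (x t ω - α • g (x t ω)) - α • ξ t ω := fun t ↦ by
    funext ω; rw [hupd, smul_add, sub_sub]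
  have hx : ∀ t, MemLp (x t) 2 μ := by
    intro t
    induction t with
    | zero => simpa only [funext hinit] using memLp_const θ₀
    | succ t ih =>
      rw [hstep]
      exact (memLp_two_comp_of_sq_norm_sub_le hT hcontr ih).sub ((hξ t).const_smul α)
  have hxξ : ∀ t, IndepFun (x t) (ξ t) μ := by
    rw [eq_noisyIterate (Φ := fun p ↦ p.1 - α • (g p.1 + p.2)) hinit hupd]
    exact indepFun_noisyIterate_of_aemeasurable (by fun_prop) (fun i ↦ (hξ i).aemeasurable) hind
  have hrec : ∀ t, ∫ ω, ‖x (t + 1) ω - θ‖ ^ 2 ∂μ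
      ≤ ρ * ∫ ω, ‖x t ω - θ‖ ^ 2 ∂μ + α ^ 2 * v := by
    intro t
    rw [hstep]
    exact (integral_sq_norm_sub_smul_sub_le hT hcontr (hxξ t) (hx t) (hξ t) (hmean t) α).trans
      (add_le_add le_rfl (mul_le_mul_of_nonneg_left (hvar t) (sq_nonneg α)))
  have hv : 0 ≤ α ^ 2 * v :=
    mul_nonneg (sq_nonneg α) ((integral_nonneg fun ω ↦ by positivity).trans (hvar 0))
  simpa [hinit, mul_div_assoc] using
    le_pow_mul_add_div_of_le_mul_add (a := fun t ↦ ∫ ω, ‖x t ω - θ‖ ^ 2 ∂μ) hρ0 hρ1 hv hrec t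

end SGD

theorem averaged_SGD_convergence_general {d n : ℕ} {m L α σ : ℝ}
    (hm : 0 < m) (hmL : m ≤ L) (hα0 : 0 < α) (hα : α ≤ 2 / (m + L))
    (f : EuclideanSpace ℝ (Fin d) → ℝ) (g : EuclideanSpace ℝ (Fin d) → EuclideanSpace ℝ (Fin d))
    (hgrad : ∀ x, HasGradientAt f (g x) x)
    (hsc : ∀ x y, f y ≥ f x + ⟪g x, y - x⟫ + (m / 2) * ‖y - x‖ ^ 2)
    (hlip : ∀ x y, ‖g x - g y‖ ≤ L * ‖x - y‖)
    (θs : EuclideanSpace ℝ (Fin d)) (hmin : ∀ x, f θs ≤ f x)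
    {Ω : Type*} [MeasureSpace Ω] [IsProbabilityMeasure (ℙ : Measure Ω)]
    (ξ : ℕ → Ω → EuclideanSpace ℝ (Fin d))
    (hindep : iIndepFun ξ ℙ)
    (hint : ∀ t, Integrable (ξ t)) (hint2 : ∀ t, Integrable (fun ω => ‖ξ t ω‖ ^ 2))
    (hmean : ∀ t, ∫ ω, ξ t ω = 0) (hvar : ∀ t, ∫ ω, ‖ξ t ω‖ ^ 2 ≤ σ ^ 2 / n)
    (θ0 : EuclideanSpace ℝ (Fin d))
    (x : ℕ → Ω → EuclideanSpace ℝ (Fin d))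
    (hinit : ∀ ω, x 0 ω = θ0)
    (hupd : ∀ t ω, x (t + 1) ω = x t ω - α • (g (x t ω) + ξ t ω)) :
    ∀ t, (∫ ω, ‖x t ω - θs‖ ^ 2) ≤
      (1 - 2 * α * (m * L / (m + L))) ^ t * ‖θ0 - θs‖ ^ 2 +
        ((m + L) / (2 * m * L * n)) * α * σ ^ 2 := by
  have hL : 0 < L := hm.trans_le hmL
  obtain ⟨hρ0, hρ1⟩ := one_sub_two_mul_mul_div_add_mem_Ico hm hL hα0 hα
  have hg : Measurable g :=
    (LipschitzWith.of_dist_le' (by simpa only [dist_eq_norm] using hlip)).continuous.measurable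
  have hξ : ∀ t, MemLp (ξ t) 2 := fun t ↦
    (memLp_two_iff_integrable_sq_norm (hint t).1).2 (hint2 t)
  have hbias : α ^ 2 * (σ ^ 2 / n) / (1 - (1 - 2 * α * (m * L / (m + L))))
      = (m + L) / (2 * m * L * n) * α * σ ^ 2 := by
    have : 0 < m + L := by positivity
    rw [sub_sub_cancel]; field_simp
  intro t
  rw [← hbias]
  exact integral_sq_norm_sgd_sub_le hg hρ0 hρ1
    (sq_norm_gradient_step_sub_le hm hmL hα0 hα hgrad hsc hlip hmin) hindep hξ hmean hvar
    hinit hupd t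

theorem averaged_SGD_convergence {d n : ℕ} {m L α σ : ℝ}
    (hn : 0 < n) (hm : 0 < m) (hmL : m ≤ L) (hα0 : 0 < α) (hα : α ≤ 2 / (m + L)) (hσ : 0 ≤ σ)
    (f : EuclideanSpace ℝ (Fin d) → ℝ) (g : EuclideanSpace ℝ (Fin d) → EuclideanSpace ℝ (Fin d))
    (hgrad : ∀ x, HasGradientAt f (g x) x)
    (hsc : ∀ x y, f y ≥ f x + ⟪g x, y - x⟫ + (m / 2) * ‖y - x‖ ^ 2)
    (hlip : ∀ x y, ‖g x - g y‖ ≤ L * ‖x - y‖)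
    (θs : EuclideanSpace ℝ (Fin d)) (hmin : ∀ x, f θs ≤ f x)
    {Ω : Type*} [MeasureSpace Ω] [IsProbabilityMeasure (ℙ : Measure Ω)]
    (ξ : ℕ → Ω → EuclideanSpace ℝ (Fin d))
    (hindep : iIndepFun ξ ℙ)
    (hint : ∀ t, Integrable (ξ t)) (hint2 : ∀ t, Integrable (fun ω => ‖ξ t ω‖ ^ 2))
    (hmean : ∀ t, ∫ ω, ξ t ω = 0) (hvar : ∀ t, ∫ ω, ‖ξ t ω‖ ^ 2 ≤ σ ^ 2 / n)
    (θ0 : EuclideanSpace ℝ (Fin d))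
    (x : ℕ → Ω → EuclideanSpace ℝ (Fin d))
    (hinit : ∀ ω, x 0 ω = θ0)
    (hupd : ∀ t ω, x (t + 1) ω = x t ω - α • (g (x t ω) + ξ t ω)) :
    ∀ t, (∫ ω, ‖x t ω - θs‖ ^ 2) ≤
      (1 - 2 * α * (m * L / (m + L))) ^ t * ‖θ0 - θs‖ ^ 2 +
        ((m + L) / (2 * m * L * n)) * α * σ ^ 2 :=
  averaged_SGD_convergence_general hm hmL hα0 hα f g hgrad hsc hlip θs hmin ξ hindep hint hint2
    hmean hvar θ0 x hinit hupd
end
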